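/- arXiv:1505.03744 — 2 statements merged into one kernel-verified Lean document; each statement's English description precedes it below -/
import Mathlib

section
/- For every a > 0 and every φ′ with |φ′| < δ/2, the limit as ε → 0⁺ of ∫_{−δ/2}^{δ/2} (a²(φ−φ′)² − 2εa)/(a²(φ−φ′)² + ε²) dφ equals δ − 2π. -/
/-!
An explicit antiderivative of the integrand is `φ ↦ φ - (ε + 2a)/a · arctan (a(φ - φ')/ε)`.
As `ε → 0⁺` the factor `(ε + 2a)/a` tends to `2` while the two arctangent terms at the
endpoints, which lie on either side of `φ'`, tend to `π/2` and `-π/2`; the jump of `π`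
across `φ'`, multiplied by `2`, accounts for the `-2π` that the pointwise limit misses.
-/

open MeasureTheory Real Filter Topology

theorem hasDerivAt_sub_mul_arctan {a ε : ℝ} (ha : a ≠ 0) (hε : ε ≠ 0) (φ' φ : ℝ) :
    HasDerivAt (fun φ => φ - (ε + 2 * a) / a * arctan (a * (φ - φ') / ε))
      ((a ^ 2 * (φ - φ') ^ 2 - 2 * ε * a) / (a ^ 2 * (φ - φ') ^ 2 + ε ^ 2)) φ := by
  have hinner : HasDerivAt (fun φ : ℝ => a * (φ - φ') / ε) (a / ε) φ := by
    simpa using (((hasDerivAt_id φ).sub_const φ').const_mul a).div_const ε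
  refine ((hasDerivAt_id φ).sub
    (((hasDerivAt_arctan _).comp φ hinner).const_mul _)).congr_deriv ?_
  have : a ^ 2 * (φ - φ') ^ 2 + ε ^ 2 ≠ 0 := by positivity
  field_simp
  ring

theorem integral_sq_sub_div_sq_add_sq {a ε : ℝ} (ha : a ≠ 0) (hε : ε ≠ 0) (α β φ' : ℝ) :
    ∫ φ in α..β, (a ^ 2 * (φ - φ') ^ 2 - 2 * ε * a) / (a ^ 2 * (φ - φ') ^ 2 + ε ^ 2) =
      β - α - (ε + 2 * a) / a *
        (arctan (a * (β - φ') / ε) - arctan (a * (α - φ') / ε)) := by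
  have hcont : Continuous fun φ : ℝ =>
      (a ^ 2 * (φ - φ') ^ 2 - 2 * ε * a) / (a ^ 2 * (φ - φ') ^ 2 + ε ^ 2) :=
    (by fun_prop : Continuous _).div (by fun_prop) fun φ => by positivity
  rw [intervalIntegral.integral_eq_sub_of_hasDerivAt
    (fun φ _ => hasDerivAt_sub_mul_arctan ha hε φ' φ) (hcont.intervalIntegrable _ _)]
  ring

theorem tendsto_arctan_div_nhdsGT_zero {c : ℝ} (hc : 0 < c) :
    Tendsto (fun ε : ℝ => arctan (c / ε)) (𝓝[>] 0) (𝓝 (π / 2)) := by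
  have hdiv : Tendsto (fun ε : ℝ => c / ε) (𝓝[>] 0) atTop := by
    simpa [div_eq_mul_inv] using tendsto_inv_nhdsGT_zero.const_mul_atTop hc
  exact (tendsto_nhds_of_tendsto_nhdsWithin tendsto_arctan_atTop).comp hdiv

theorem tendsto_integral_sq_sub_div_sq_add_sq {a α β φ' : ℝ} (ha : 0 < a) (hα : α < φ')
    (hβ : φ' < β) :
    Tendsto (fun ε : ℝ => ∫ φ in α..β,
        (a ^ 2 * (φ - φ') ^ 2 - 2 * ε * a) / (a ^ 2 * (φ - φ') ^ 2 + ε ^ 2))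
      (𝓝[>] 0) (𝓝 (β - α - 2 * π)) := by
  have hfactor : Tendsto (fun ε : ℝ => (ε + 2 * a) / a) (𝓝[>] 0) (𝓝 2) := by
    have : Tendsto (fun ε : ℝ => (ε + 2 * a) / a) (𝓝 0) (𝓝 ((0 + 2 * a) / a)) :=
      (continuous_id.add continuous_const).tendsto 0 |>.div_const a
    rw [zero_add, mul_div_cancel_right₀ _ ha.ne'] at this
    exact this.mono_left nhdsWithin_le_nhds
  have hright := tendsto_arctan_div_nhdsGT_zero (mul_pos ha (sub_pos.2 hβ))
  have hleft := tendsto_arctan_div_nhdsGT_zero (mul_pos ha (sub_pos.2 hα))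
  have hlim := tendsto_const_nhds (x := β - α) |>.sub (hfactor.mul (hright.add hleft))
  rw [show β - α - 2 * (π / 2 + π / 2) = β - α - 2 * π by ring] at hlim
  refine hlim.congr' (eventually_nhdsWithin_of_forall fun ε (hε : 0 < ε) => ?_)
  dsimp only
  rw [integral_sq_sub_div_sq_add_sq ha.ne' hε.ne',
    show a * (α - φ') / ε = -(a * (φ' - α) / ε) by ring, arctan_neg, sub_neg_eq_add]

theorem stmt1_general (δ a φ' : ℝ) (ha : 0 < a) (hφ' : |φ'| < δ / 2) :
    Tendsto (fun ε : ℝ => ∫ φ in (-δ/2)..(δ/2),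
        (a ^ 2 * (φ - φ') ^ 2 - 2 * ε * a) / (a ^ 2 * (φ - φ') ^ 2 + ε ^ 2))
      (nhdsWithin 0 (Set.Ioi 0)) (nhds (δ - 2 * Real.pi)) := by
  obtain ⟨hleft, hright⟩ := abs_lt.mp hφ'
  have := tendsto_integral_sq_sub_div_sq_add_sq ha (by linarith : -δ / 2 < φ') hright
  rwa [show δ / 2 - -δ / 2 = δ by ring] at this

/-- For `a > 0` and `|φ′| < δ/2`, the limit as `ε → 0⁺` of
`∫_{−δ/2}^{δ/2} (a²(φ−φ′)² − 2εa)/(a²(φ−φ′)² + ε²) dφ` equals `δ − 2π`. -/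
theorem stmt1 (δ a φ' : ℝ) (hδ : 0 < δ) (ha : 0 < a) (hφ' : |φ'| < δ / 2) :
    Tendsto (fun ε : ℝ => ∫ φ in (-δ/2)..(δ/2),
        (a ^ 2 * (φ - φ') ^ 2 - 2 * ε * a) / (a ^ 2 * (φ - φ') ^ 2 + ε ^ 2))
      (nhdsWithin 0 (Set.Ioi 0)) (nhds (δ - 2 * Real.pi)) :=
  stmt1_general δ a φ' ha hφ'
end

section
/- For a > 0, as z′ → 0⁺ the function z′ ↦ ∫_{0}^{π} dθ/√(2a²(1−cos θ) + z′²) + (1/a)·ln(z′/(8a)) remains bounded (in fact extends continuously to z′ = 0 with limit 0), so the combined integrand in the MoM self-term is integrable on (0, δ/2]. -/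
/-!
By the half-angle formula the radicand is `(2a sin(θ/2))² + z'²`. Write the numerator as
`cos(θ/2) + (1 - cos(θ/2))`. The first part has the primitive `(1/a) arsinh(2a sin(θ/2)/z')`,
so it integrates to `(1/a) arsinh(2a/z') = (1/a) log(4a/z') + o(1)`, which cancels the logarithm
up to `-(1/a) log 2`. The second part is dominated, uniformly in `z'`, by
`(1 - cos(θ/2)) / (2a sin(θ/2)) = sin(θ/2) / (2a (1 + cos(θ/2)))`, a continuous function, and
by dominated convergence its integral tends to `(1/a) log 2`.
-/

open MeasureTheory Real Filter Topology Set intervalIntegral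

lemma two_mul_sq_mul_one_sub_cos (a θ : ℝ) :
    2 * a ^ 2 * (1 - cos θ) = (2 * a * sin (θ / 2)) ^ 2 := by
  have h := cos_sq (θ / 2)
  rw [show 2 * (θ / 2) = θ by ring] at h
  nlinarith [sin_sq_add_cos_sq (θ / 2)]

lemma one_sub_cos_div_sin {x : ℝ} (hx : sin x ≠ 0) :
    (1 - cos x) / sin x = sin x / (1 + cos x) := by
  have hcos : 1 + cos x ≠ 0 := by
    intro h
    exact hx (pow_eq_zero_iff two_ne_zero |>.1 (by nlinarith [sin_sq_add_cos_sq x]))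
  rw [div_eq_div_iff hx hcos]
  nlinarith [sin_sq_add_cos_sq x]

lemma tendsto_arsinh_sub_log_two_mul :
    Tendsto (fun x => arsinh x - log (2 * x)) atTop (𝓝 0) := by
  have hcont : ContinuousAt (fun y : ℝ => log ((1 + √(1 + y ^ 2)) / 2)) 0 :=
    ContinuousAt.log (by fun_prop) (by norm_num)
  have hlim := hcont.tendsto.comp tendsto_inv_atTop_zero
  rw [zero_pow two_ne_zero, add_zero, sqrt_one, add_self_div_two, log_one] at hlim
  refine hlim.congr' ?_
  filter_upwards [eventually_gt_atTop 0] with x hx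
  have hsqrt : √(1 + x⁻¹ ^ 2) = √(1 + x ^ 2) / x := by
    rw [show 1 + x⁻¹ ^ 2 = (1 + x ^ 2) / x ^ 2 by field_simp; ring, sqrt_div (by positivity),
      sqrt_sq hx.le]
  rw [Function.comp_apply, arsinh, ← log_div (by positivity) (by positivity), hsqrt]
  congr 1
  field_simp

lemma sin_half_pos {θ : ℝ} (hθ : θ ∈ Ioc 0 π) : 0 < sin (θ / 2) :=
  sin_pos_of_pos_of_lt_pi (by linarith [hθ.1]) (by linarith [hθ.2, pi_pos])

lemma one_add_cos_half_pos {θ : ℝ} (hθ : θ ∈ Icc 0 π) : 0 < 1 + cos (θ / 2) := by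
  have := cos_nonneg_of_mem_Icc (x := θ / 2) ⟨by linarith [hθ.1, pi_pos], by linarith [hθ.2]⟩
  linarith

lemma integral_sin_half_div_one_add_cos_half :
    ∫ θ in 0..π, sin (θ / 2) / (1 + cos (θ / 2)) = 2 * log 2 := by
  have hderiv : ∀ θ ∈ uIcc 0 π, HasDerivAt (fun t => -2 * log (1 + cos (t / 2)))
      (sin (θ / 2) / (1 + cos (θ / 2))) θ := by
    intro θ hθ
    rw [uIcc_of_le pi_pos.le] at hθ
    refine ((((hasDerivAt_id θ).div_const 2).cos.const_add 1).log
      (one_add_cos_half_pos hθ).ne').const_mul (-2) |>.congr_deriv ?_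
    simp only [id]
    field_simp
  have hint : IntervalIntegrable (fun θ => sin (θ / 2) / (1 + cos (θ / 2))) volume 0 π := by
    refine ContinuousOn.intervalIntegrable (ContinuousOn.div (by fun_prop) (by fun_prop) ?_)
    intro θ hθ
    rw [uIcc_of_le pi_pos.le] at hθ
    exact (one_add_cos_half_pos hθ).ne'
  rw [integral_eq_sub_of_hasDerivAt hderiv hint]
  norm_num

section HalfAngleKernel

variable {c z : ℝ}

lemma continuous_div_sqrt_sin_half (hz : 0 < z) {f : ℝ → ℝ} (hf : Continuous f) :
    Continuous fun θ => f θ / √((c * sin (θ / 2)) ^ 2 + z ^ 2) :=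
  hf.div (by fun_prop) fun θ => (sqrt_pos.2 (by positivity)).ne'

lemma hasDerivAt_arsinh_mul_sin_half (hc : c ≠ 0) (hz : 0 < z) (θ : ℝ) :
    HasDerivAt (fun t => 2 / c * arsinh (c * sin (t / 2) / z))
      (cos (θ / 2) / √((c * sin (θ / 2)) ^ 2 + z ^ 2)) θ := by
  refine ((((hasDerivAt_id θ).div_const 2).sin.const_mul c).div_const z).arsinh.const_mul (2 / c)
    |>.congr_deriv ?_
  have hsqrt : √(1 + (c * sin (θ / 2) / z) ^ 2) = √((c * sin (θ / 2)) ^ 2 + z ^ 2) / z := by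
    rw [show 1 + (c * sin (θ / 2) / z) ^ 2 = ((c * sin (θ / 2)) ^ 2 + z ^ 2) / z ^ 2 by
      field_simp; ring, sqrt_div (by positivity), sqrt_sq hz.le]
  simp only [id, hsqrt, smul_eq_mul]
  field_simp

lemma integral_cos_half_div_sqrt (hc : c ≠ 0) (hz : 0 < z) :
    ∫ θ in 0..π, cos (θ / 2) / √((c * sin (θ / 2)) ^ 2 + z ^ 2)
      = 2 / c * arsinh (c / z) := by
  rw [integral_eq_sub_of_hasDerivAt (fun θ _ => hasDerivAt_arsinh_mul_sin_half hc hz θ)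
    ((continuous_div_sqrt_sin_half hz (by fun_prop)).intervalIntegrable _ _)]
  simp

lemma integral_one_div_sqrt_eq_add_arsinh (hc : c ≠ 0) (hz : 0 < z) :
    ∫ θ in 0..π, 1 / √((c * sin (θ / 2)) ^ 2 + z ^ 2)
      = (∫ θ in 0..π, (1 - cos (θ / 2)) / √((c * sin (θ / 2)) ^ 2 + z ^ 2))
        + 2 / c * arsinh (c / z) := by
  rw [← integral_cos_half_div_sqrt hc hz,
    ← integral_add ((continuous_div_sqrt_sin_half hz (by fun_prop)).intervalIntegrable _ _)
      ((continuous_div_sqrt_sin_half hz (by fun_prop)).intervalIntegrable _ _)]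
  simp only [← add_div, sub_add_cancel]

lemma one_sub_cos_half_div_sqrt_zero (hc : 0 < c) {θ : ℝ} (hθ : θ ∈ Ioc 0 π) :
    (1 - cos (θ / 2)) / √((c * sin (θ / 2)) ^ 2 + 0 ^ 2)
      = sin (θ / 2) / (1 + cos (θ / 2)) / c := by
  have hs := sin_half_pos hθ
  rw [zero_pow two_ne_zero, add_zero, sqrt_sq (by positivity), div_mul_eq_div_div_swap,
    one_sub_cos_div_sin hs.ne']

lemma norm_one_sub_cos_half_div_sqrt_le (hc : 0 < c) {θ : ℝ} (hθ : θ ∈ Ioc 0 π) :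
    ‖(1 - cos (θ / 2)) / √((c * sin (θ / 2)) ^ 2 + z ^ 2)‖
      ≤ sin (θ / 2) / (1 + cos (θ / 2)) / c := by
  have hs := sin_half_pos hθ
  rw [← one_sub_cos_half_div_sqrt_zero hc hθ, norm_of_nonneg
    (div_nonneg (sub_nonneg.2 (cos_le_one _)) (sqrt_nonneg _))]
  refine div_le_div_of_nonneg_left (sub_nonneg.2 (cos_le_one _)) (sqrt_pos.2 (by positivity))
    (sqrt_le_sqrt ?_)
  simp only [zero_pow two_ne_zero, add_zero, le_add_iff_nonneg_right]
  positivity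

lemma tendsto_integral_one_sub_cos_half_div_sqrt (hc : 0 < c) :
    Tendsto (fun z => ∫ θ in 0..π, (1 - cos (θ / 2)) / √((c * sin (θ / 2)) ^ 2 + z ^ 2))
      (𝓝[>] 0) (𝓝 (2 * log 2 / c)) := by
  rw [← integral_sin_half_div_one_add_cos_half, ← intervalIntegral.integral_div]
  have hIoc : uIoc 0 π = Ioc 0 π := uIoc_of_le pi_pos.le
  refine tendsto_integral_filter_of_dominated_convergence
    (fun θ => sin (θ / 2) / (1 + cos (θ / 2)) / c) ?_ ?_ ?_ ?_
  · filter_upwards [self_mem_nhdsWithin] with z hz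
    exact (continuous_div_sqrt_sin_half hz (by fun_prop)).aestronglyMeasurable
  · filter_upwards [self_mem_nhdsWithin] with z hz
    exact ae_of_all _ fun θ hθ => norm_one_sub_cos_half_div_sqrt_le hc (hIoc ▸ hθ)
  · refine ContinuousOn.intervalIntegrable (ContinuousOn.div_const
      (ContinuousOn.div (by fun_prop) (by fun_prop) fun θ hθ => ?_) c)
    rw [uIcc_of_le pi_pos.le] at hθ
    exact (one_add_cos_half_pos hθ).ne'
  · refine ae_of_all _ fun θ hθ => ?_
    rw [hIoc] at hθ
    have hs := sin_half_pos hθ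
    have hcont :
        ContinuousAt (fun z => (1 - cos (θ / 2)) / √((c * sin (θ / 2)) ^ 2 + z ^ 2)) 0 :=
      continuousAt_const.div (by fun_prop) (sqrt_pos.2 (by positivity)).ne'
    rw [← one_sub_cos_half_div_sqrt_zero hc hθ]
    exact hcont.tendsto.mono_left nhdsWithin_le_nhds

end HalfAngleKernel

/-- For `a > 0`, as `z′ → 0⁺`,
`∫₀^π dθ/√(2a²(1−cosθ)+z′²) + (1/a)ln(z′/(8a))` tends to `0`. -/
theorem stmt10 (a : ℝ) (ha : 0 < a) :
    Tendsto (fun z' : ℝ =>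
        (∫ θ in (0:ℝ)..Real.pi, 1 / Real.sqrt (2 * a ^ 2 * (1 - Real.cos θ) + z' ^ 2))
          + (1 / a) * Real.log (z' / (8 * a)))
      (nhdsWithin 0 (Set.Ioi 0)) (nhds 0) := by
  have hregular := tendsto_integral_one_sub_cos_half_div_sqrt (c := 2 * a) (by positivity)
  have hsingular :
      Tendsto (fun z => arsinh (2 * a / z) - log (2 * (2 * a / z))) (𝓝[>] 0) (𝓝 0) :=
    tendsto_arsinh_sub_log_two_mul.comp <|
      (tendsto_inv_nhdsGT_zero.const_mul_atTop (by positivity)).congr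
        fun z => (div_eq_mul_inv _ z).symm
  have hsum := (hregular.add (hsingular.const_mul (1 / a))).sub_const (1 / a * log 2)
  rw [show 2 * log 2 / (2 * a) + 1 / a * 0 - 1 / a * log 2 = 0 by field_simp; ring] at hsum
  refine hsum.congr' ?_
  filter_upwards [self_mem_nhdsWithin] with z (hz : 0 < z)
  simp only [two_mul_sq_mul_one_sub_cos]
  have hlog : log (z / (8 * a)) = -log (2 * (2 * a / z)) - log 2 := by
    rw [sub_eq_add_neg, ← neg_add, ← log_mul (by positivity) two_ne_zero, ← log_inv]
    congr 1
    field_simp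
    ring
  rw [integral_one_div_sqrt_eq_add_arsinh (by positivity) hz, hlog]
  field_simp
  ring
end
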